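/- arXiv:1510.01868 — 7 statements merged into one kernel-verified Lean document; each statement's English description precedes it below -/
import Mathlib

section
/- Let U be a semigroup and S a subsemigroup of U. If x and y are regular elements of S, then x and y are K-related in U if and only if they are K-related in S, where K is any of Green's relations R, L, or H. -/
variable {U : Type*}

/-- Green's R-relation relative to a set `T` of multipliers (`T = S` gives `R^S`,
`T = Set.univ` gives `R^U`): `x R y` iff `x ∈ y T^1` and `y ∈ x T^1`. -/
def GreenR [Mul U] (T : Set U) (x y : U) : Prop :=
  (x = y ∨ ∃ a ∈ T, x * a = y) ∧ (y = x ∨ ∃ a ∈ T, y * a = x)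

/-- Green's L-relation relative to a set `T` of multipliers. -/
def GreenL [Mul U] (T : Set U) (x y : U) : Prop :=
  (x = y ∨ ∃ a ∈ T, a * x = y) ∧ (y = x ∨ ∃ a ∈ T, a * y = x)

/-- Green's H-relation relative to `T`. -/
def GreenH [Mul U] (T : Set U) (x y : U) : Prop :=
  GreenL T x y ∧ GreenR T x y

/-- Green's D-relation relative to `T` (for finite semigroups, `D = R ∘ L`). -/
def GreenD [Mul U] (T : Set U) (x y : U) : Prop :=
  ∃ z, GreenR T x z ∧ GreenL T z y

/-- The `L^U`-class of `x` in the ambient semigroup `U`. -/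
def Lcl [Mul U] (x : U) : Set U := {y | GreenL Set.univ x y}

/-- The `R^U`-class of `x` in the ambient semigroup `U`. -/
def RclU [Mul U] (x : U) : Set U := {y | GreenR Set.univ x y}

/-- The `R`-class of `x` relative to multipliers from `T`. -/
def Rcl [Mul U] (T : Set U) (x : U) : Set U := {y | GreenR T x y}

/-- `L_a^U` reaches `L_b^U` under the right action of `T^1` on `L^U`-classes
given by `L_a · s = L_{a s}`. -/
def reachC [Mul U] (T : Set U) (a b : U) : Prop :=
  Lcl a = Lcl b ∨ ∃ s ∈ T, Lcl (a * s) = Lcl b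

/-- `R_a^U` reaches `R_b^U` under the left action of `T^1` on `R^U`-classes. -/
def reachCL [Mul U] (T : Set U) (a b : U) : Prop :=
  RclU a = RclU b ∨ ∃ s ∈ T, RclU (s * a) = RclU b

/-- The right action of `S^1` (identity adjoined, encoded as `Option ↥S`) on `U`. -/
def act1 [Mul U] (S : Subsemigroup U) (u : U) (o : Option ↥S) : U :=
  o.elim u (fun s => u * (s : U))

/-- The left action of `S^1` on `U`. -/
def act1L [Mul U] (S : Subsemigroup U) (o : Option ↥S) (u : U) : U :=
  o.elim u (fun s => (s : U) * u)

/-- The stabiliser `Stab_S(L_x^U)` of the `L^U`-class of `x` under the right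
action of `S^1` on subsets of `U`. -/
def StabOfL [Mul U] (S : Subsemigroup U) (x : U) : Set (Option ↥S) :=
  {o | (fun y => act1 S y o) '' Lcl x = Lcl x}

/-- The stabiliser `Stab_S(R_x^U)` of the `R^U`-class of `x` under the left
action of `S^1` on subsets of `U`. -/
def StabOfR [Mul U] (S : Subsemigroup U) (x : U) : Set (Option ↥S) :=
  {o | (fun y => act1L S o y) '' RclU x = RclU x}

section Regular

variable [Semigroup U] {x x' y : U}

theorem mul_mul_inverse_mul_of_regular_right (hx : x * x' * x = x) (a : U) :
    x * (x' * (x * a)) = x * a := by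
  rw [← mul_assoc, ← mul_assoc, hx]

theorem mul_mul_inverse_mul_of_regular_left (hx : x * x' * x = x) (a : U) :
    a * x * x' * x = a * x := by
  rw [mul_assoc a x x', mul_assoc a (x * x') x, hx]

end Regular

theorem GreenR.mono [Mul U] {T T' : Set U} (hT : T ⊆ T') {x y : U} (h : GreenR T x y) :
    GreenR T' x y :=
  ⟨h.1.imp_right fun ⟨a, ha, hxa⟩ => ⟨a, hT ha, hxa⟩,
    h.2.imp_right fun ⟨a, ha, hya⟩ => ⟨a, hT ha, hya⟩⟩

theorem GreenL.mono [Mul U] {T T' : Set U} (hT : T ⊆ T') {x y : U} (h : GreenL T x y) :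
    GreenL T' x y :=
  ⟨h.1.imp_right fun ⟨a, ha, hax⟩ => ⟨a, hT ha, hax⟩,
    h.2.imp_right fun ⟨a, ha, hay⟩ => ⟨a, hT ha, hay⟩⟩

section Subsemigroup

variable [Semigroup U] (S : Subsemigroup U) {x y : U}

/-- The witness: `y = x a` implies `y = x (x' y)`, and `x' y ∈ S`. -/
theorem eq_or_exists_mul_right_mem_of_regular (hy : y ∈ S) (hxreg : ∃ x' ∈ S, x * x' * x = x)
    (h : x = y ∨ ∃ a ∈ (Set.univ : Set U), x * a = y) :
    x = y ∨ ∃ a ∈ (S : Set U), x * a = y := by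
  obtain ⟨x', hx', hxx⟩ := hxreg
  refine h.imp_right fun ⟨a, _, hxa⟩ => ⟨x' * y, S.mul_mem hx' hy, ?_⟩
  rw [← hxa, mul_mul_inverse_mul_of_regular_right hxx]

theorem eq_or_exists_mul_left_mem_of_regular (hy : y ∈ S) (hxreg : ∃ x' ∈ S, x * x' * x = x)
    (h : x = y ∨ ∃ a ∈ (Set.univ : Set U), a * x = y) :
    x = y ∨ ∃ a ∈ (S : Set U), a * x = y := by
  obtain ⟨x', hx', hxx⟩ := hxreg
  refine h.imp_right fun ⟨a, _, hax⟩ => ⟨y * x', S.mul_mem hy hx', ?_⟩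
  rw [← hax, mul_mul_inverse_mul_of_regular_left hxx]

theorem greenR_univ_iff_of_regular (hx : x ∈ S) (hy : y ∈ S)
    (hxreg : ∃ x' ∈ S, x * x' * x = x) (hyreg : ∃ y' ∈ S, y * y' * y = y) :
    GreenR (Set.univ : Set U) x y ↔ GreenR (S : Set U) x y :=
  ⟨fun h => ⟨eq_or_exists_mul_right_mem_of_regular S hy hxreg h.1,
      eq_or_exists_mul_right_mem_of_regular S hx hyreg h.2⟩,
    GreenR.mono (Set.subset_univ _)⟩

theorem greenL_univ_iff_of_regular (hx : x ∈ S) (hy : y ∈ S)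
    (hxreg : ∃ x' ∈ S, x * x' * x = x) (hyreg : ∃ y' ∈ S, y * y' * y = y) :
    GreenL (Set.univ : Set U) x y ↔ GreenL (S : Set U) x y :=
  ⟨fun h => ⟨eq_or_exists_mul_left_mem_of_regular S hy hxreg h.1,
      eq_or_exists_mul_left_mem_of_regular S hx hyreg h.2⟩,
    GreenL.mono (Set.subset_univ _)⟩

end Subsemigroup

/-- If `x` and `y` are regular elements of a subsemigroup `S` of a semigroup `U`,
then `x K^U y ↔ x K^S y` for `K` any of Green's relations `R`, `L`, `H`. -/
theorem greens_relations_of_regular_subsemigroup [Semigroup U] (S : Subsemigroup U)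
    (x y : U) (hx : x ∈ S) (hy : y ∈ S)
    (hxreg : ∃ x' ∈ S, x * x' * x = x) (hyreg : ∃ y' ∈ S, y * y' * y = y) :
    (GreenR (Set.univ : Set U) x y ↔ GreenR (S : Set U) x y) ∧
    (GreenL (Set.univ : Set U) x y ↔ GreenL (S : Set U) x y) ∧
    (GreenH (Set.univ : Set U) x y ↔ GreenH (S : Set U) x y) := by
  have hR := greenR_univ_iff_of_regular S hx hy hxreg hyreg
  have hL := greenL_univ_iff_of_regular S hx hy hxreg hyreg
  exact ⟨hR, hL, and_congr hL hR⟩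
end

section
/- Let S be a semigroup acting on the right on a finite set Ω, and consider the induced action on subsets of Ω. If Σ₁ and Σ₂ are subsets of Ω in the same strongly connected component of this action (i.e. each is an image of the other under elements of S^1), and u ∈ S^1 satisfies Σ₁·u = Σ₂, then there exists v ∈ S^1 such that Σ₂·v = Σ₁, the map u restricted to Σ₁ followed by v restricted to Σ₂ is the identity on Σ₁, and v restricted to Σ₂ followed by u restricted to Σ₁ is the identity on Σ₂. -/
/-!
Put `s = u * t`, where `t` maps `Sig2` onto `Sig1`. Then `s` maps the finite set `Sig1` onto
itself, so it permutes `Sig1` and some power `s ^ n` with `n > 0` fixes `Sig1` pointwise.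
The inverse of `u` on `Sig1` is `v = t * s ^ (n - 1)`, since `u * v = s ^ n`.
-/

open Set Function

theorem Set.Finite.exists_pos_iterate_eqOn_id_of_image_eq {α : Type*} {f : α → α} {s : Set α}
    (hs : s.Finite) (hf : f '' s = s) : ∃ n, 0 < n ∧ EqOn f^[n] id s := by
  have hmaps : MapsTo f s s := mapsTo_iff_image_subset.2 hf.subset
  have hbij : BijOn f s s := (hs.surjOn_iff_bijOn_of_mapsTo hmaps).1 hf.symm.subset
  have : Finite s := hs.to_subtype
  let e : Equiv.Perm s := hbij.equiv
  refine ⟨orderOf e, orderOf_pos e, fun a ha => ?_⟩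
  have he : ⇑(e ^ orderOf e) = (hmaps.restrict f s s)^[orderOf e] := Equiv.Perm.coe_pow e _
  simpa [← he] using (hmaps.coe_iterate_restrict ⟨a, ha⟩ (orderOf e)).symm

section RightAction

variable {M Ω : Type*} [Monoid M] {act : Ω → M → Ω}

theorem image_act_mul (hmul : ∀ α s t, act (act α s) t = act α (s * t)) (A : Set Ω) (s t : M) :
    (fun α => act α (s * t)) '' A = (fun α => act α t) '' ((fun α => act α s) '' A) := by
  simp only [image_image, hmul]

theorem act_pow_eq_iterate (hone : ∀ α, act α 1 = α)
    (hmul : ∀ α s t, act (act α s) t = act α (s * t)) (s : M) (n : ℕ) :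
    (fun α => act α (s ^ n)) = (fun α => act α s)^[n] := by
  induction n with
  | zero => funext α; simp only [pow_zero, hone, iterate_zero, id]
  | succ n ih =>
    funext α
    rw [iterate_succ_apply, ← ih, pow_succ']
    exact (hmul α s (s ^ n)).symm

end RightAction

/-- Variant of Schreier's theorem for semigroup actions (Proposition on strongly
connected components): if a monoid `M` (playing the role of `S^1`) acts on the
right on a finite set `Ω` via `act`, and the subsets `Sig1`, `Sig2` lie in the same
strongly connected component of the induced action on subsets, then for any
`u ∈ M` with `Sig1 · u = Sig2` there is `v ∈ M` with `Sig2 · v = Sig1` such that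
`u|_{Sig1} ∘ v|_{Sig2} = id_{Sig1}` and `v|_{Sig2} ∘ u|_{Sig1} = id_{Sig2}`. -/
theorem exists_inverse_on_scc {M Ω : Type*} [Monoid M] [Finite Ω]
    (act : Ω → M → Ω)
    (hone : ∀ α, act α 1 = α)
    (hmul : ∀ α s t, act (act α s) t = act α (s * t))
    (Sig1 Sig2 : Set Ω)
    (hscc : ∃ s t : M, (fun α => act α s) '' Sig1 = Sig2 ∧ (fun α => act α t) '' Sig2 = Sig1)
    (u : M) (hu : (fun α => act α u) '' Sig1 = Sig2) :
    ∃ v : M, (fun α => act α v) '' Sig2 = Sig1 ∧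
      (∀ α ∈ Sig1, act (act α u) v = α) ∧
      (∀ β ∈ Sig2, act (act β v) u = β) := by
  obtain ⟨-, t, -, ht⟩ := hscc
  have hs : (fun α => act α (u * t)) '' Sig1 = Sig1 := by rw [image_act_mul hmul, hu, ht]
  obtain ⟨n, hn, hfix⟩ := Sig1.toFinite.exists_pos_iterate_eqOn_id_of_image_eq hs
  have hret : ∀ α ∈ Sig1, act (act α u) (t * (u * t) ^ (n - 1)) = α := fun α hα => by
    rw [hmul, ← mul_assoc, ← pow_succ', Nat.sub_add_cancel hn]
    exact (congrFun (act_pow_eq_iterate hone hmul _ n) α).trans (hfix hα)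
  refine ⟨t * (u * t) ^ (n - 1), ?_, hret, ?_⟩
  · rw [image_act_mul hmul, ht, act_pow_eq_iterate hone hmul]
    exact IsFixedPt.image_iterate hs (n - 1)
  · rw [← hu]
    rintro _ ⟨α, hα, rfl⟩
    rw [hret α hα]
end

section
/- Let U be a finite semigroup and S a subsemigroup of U. For x ∈ S and s ∈ S^1: the L^U-classes L_x and L_{xs} lie in the same strongly connected component of the right action of S on U/L^U if and only if x R^S xs. -/
variable {U : Type*}

/-! Proof idea: if `L_x` and `L_{xw}` lie in one component (`w ∈ S`), then `x w = x` or `u x w = x`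
for some `u ∈ U`. The elements `v ∈ w S^1` with `t x v = x` for some `t ∈ U` form a nonempty
subsemigroup, so by finiteness it contains an idempotent `e`; then `x e = t x e e = t x e = x`,
and writing `e = w a` with `a ∈ S^1` shows `x w R^S x`. The converse is immediate. -/

theorem exists_isIdempotentElem_of_finite {M : Type*} [Semigroup M] [Finite M]
    (T : Subsemigroup M) (hT : (T : Set M).Nonempty) : ∃ e ∈ T, IsIdempotentElem e := by
  let : TopologicalSpace M := ⊥
  have : DiscreteTopology M := ⟨rfl⟩
  exact exists_idempotent_in_compact_subsemigroup (fun _ => continuous_of_discreteTopology)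
    (T : Set M) hT (Set.toFinite _).isCompact fun _ ha _ hb => T.mul_mem ha hb

theorem GreenL.symm [Mul U] {T : Set U} {x y : U} (h : GreenL T x y) : GreenL T y x :=
  ⟨h.2, h.1⟩

theorem greenL_of_Lcl_eq [Mul U] {a b : U} (h : Lcl a = Lcl b) : GreenL Set.univ a b := by
  have hb : b ∈ Lcl b := ⟨Or.inl rfl, Or.inl rfl⟩
  rwa [← h] at hb

def stabilisingMultiples [Semigroup U] (S : Subsemigroup U) {w : U} (hw : w ∈ S) (x : U) :
    Subsemigroup U where
  carrier := {v | (v = w ∨ ∃ a ∈ S, w * a = v) ∧ ∃ t, t * (x * v) = x}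
  mul_mem' := by
    rintro v₁ v₂ ⟨hv₁, t₁, ht₁⟩ ⟨hv₂, t₂, ht₂⟩
    have hv₂S : v₂ ∈ S := by
      rcases hv₂ with rfl | ⟨a, ha, rfl⟩
      exacts [hw, S.mul_mem hw ha]
    refine ⟨?_, t₂ * t₁, ?_⟩
    · rcases hv₁ with rfl | ⟨a, ha, rfl⟩
      · exact Or.inr ⟨v₂, hv₂S, rfl⟩
      · exact Or.inr ⟨a * v₂, S.mul_mem ha hv₂S, (mul_assoc _ _ _).symm⟩
    · calc t₂ * t₁ * (x * (v₁ * v₂)) = t₂ * ((t₁ * (x * v₁)) * v₂) := by simp only [mul_assoc]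
        _ = x := by rw [ht₁, ht₂]

theorem greenR_mul_of_greenL_mul [Semigroup U] [Finite U] (S : Subsemigroup U) {x w : U}
    (hw : w ∈ S) (h : GreenL Set.univ x (x * w)) : GreenR S x (x * w) := by
  refine ⟨Or.inr ⟨w, hw, rfl⟩, ?_⟩
  rcases h.2 with hxw | ⟨u, -, hu⟩
  · exact Or.inl hxw
  obtain ⟨e, ⟨he, t, ht⟩, hee⟩ :=
    exists_isIdempotentElem_of_finite (stabilisingMultiples S hw x) ⟨w, Or.inl rfl, u, hu⟩
  have hxe : x * e = x := by
    calc x * e = t * (x * e) * e := by rw [ht]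
      _ = t * (x * e) := by rw [mul_assoc, mul_assoc, hee.eq]
      _ = x := ht
  rcases he with rfl | ⟨a, ha, rfl⟩
  · exact Or.inl hxe
  · exact Or.inr ⟨a, ha, by rw [mul_assoc, hxe]⟩

theorem GreenR.of_mul_mul [Semigroup U] {S : Subsemigroup U} {x s t : U} (hs : s ∈ S)
    (ht : t ∈ S) (h : GreenR S x (x * s * t)) : GreenR S x (x * s) := by
  refine ⟨Or.inr ⟨s, hs, rfl⟩, ?_⟩
  rcases h.2 with hx | ⟨a, ha, hx⟩
  · exact Or.inr ⟨t, ht, hx⟩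
  · exact Or.inr ⟨t * a, S.mul_mem ht ha, by rw [← mul_assoc, hx]⟩

theorem scc_iff_rclass_general [Semigroup U] [Finite U] (S : Subsemigroup U)
    (x : U) (y : U) (hy : y = x ∨ ∃ s ∈ S, x * s = y) :
    (reachC (S : Set U) x y ∧ reachC (S : Set U) y x) ↔ GreenR (S : Set U) x y := by
  rcases hy with rfl | ⟨s, hs, rfl⟩
  · exact iff_of_true ⟨Or.inl rfl, Or.inl rfl⟩ ⟨Or.inl rfl, Or.inl rfl⟩
  constructor
  · rintro ⟨-, hLx | ⟨t, ht, hLx⟩⟩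
    · exact greenR_mul_of_greenL_mul S hs (greenL_of_Lcl_eq hLx).symm
    · have hL : GreenL Set.univ x (x * (s * t)) := by
        rw [← mul_assoc]; exact (greenL_of_Lcl_eq hLx).symm
      have hR := greenR_mul_of_greenL_mul S (S.mul_mem hs ht) hL
      rw [← mul_assoc] at hR
      exact hR.of_mul_mul hs ht
  · rintro ⟨-, hx | ⟨a, ha, hx⟩⟩
    · exact ⟨Or.inr ⟨s, hs, rfl⟩, Or.inl (congrArg Lcl hx)⟩
    · exact ⟨Or.inr ⟨s, hs, rfl⟩, Or.inr ⟨a, ha, congrArg Lcl hx⟩⟩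

/-- For `x ∈ S` and `s ∈ S^1` (so that `y = x s`), the classes `L_x^U` and
`L_{xs}^U` lie in the same strongly connected component of the right action of
`S` on `U/L^U` if and only if `x R^S x s`. -/
theorem scc_iff_rclass [Semigroup U] [Finite U] (S : Subsemigroup U)
    (x : U) (hx : x ∈ S) (y : U) (hy : y = x ∨ ∃ s ∈ S, x * s = y) :
    (reachC (S : Set U) x y ∧ reachC (S : Set U) y x) ↔ GreenR (S : Set U) x y :=
  scc_iff_rclass_general S x y hy
end

section
/- Let U be a finite semigroup, S a subsemigroup of U, and let x, y, s ∈ S. If x R^S y and xs L^U y, then xs R^S y. -/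
variable {U : Type*}

/-!
Write `x s = y e` with `e ∈ S`; then `x s L^U y` gives `y = u (y e)`. The multipliers
`t ∈ e S¹` with `y ∈ U (y t)` form a subsemigroup of the finite semigroup `U` containing `e`,
so they contain an idempotent `f`. From `y = w (y f)` we get `y f = y`, and `f ∈ e S¹` exhibits
`y` in `(y e) S¹`.
-/

theorem Subsemigroup.exists_mul_self_eq_of_finite {M : Type*} [Semigroup M] [Finite M]
    (T : Subsemigroup M) (hT : (T : Set M).Nonempty) : ∃ m ∈ T, m * m = m :=
  letI : TopologicalSpace M := ⊥
  haveI : DiscreteTopology M := ⟨rfl⟩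
  exists_idempotent_in_compact_subsemigroup (fun _ => continuous_of_discreteTopology) (T : Set M)
    hT (Set.toFinite _).isCompact fun _ ha _ hb => T.mul_mem ha hb

def lRecoveringMultipliers [Semigroup U] (S : Subsemigroup U) (e y : U) (he : e ∈ S) :
    Subsemigroup U where
  carrier := {t | (t = e ∨ ∃ a ∈ S, e * a = t) ∧ ∃ w, y = w * (y * t)}
  mul_mem' := by
    rintro t₁ t₂ ⟨ht₁, w₁, hw₁⟩ ⟨ht₂, w₂, hw₂⟩
    have ht₂S : t₂ ∈ S := by
      rcases ht₂ with rfl | ⟨a, ha, rfl⟩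
      exacts [he, S.mul_mem he ha]
    refine ⟨Or.inr ?_, w₂ * w₁, ?_⟩
    · rcases ht₁ with rfl | ⟨a, ha, rfl⟩
      exacts [⟨t₂, ht₂S, rfl⟩, ⟨a * t₂, S.mul_mem ha ht₂S, (mul_assoc e a t₂).symm⟩]
    · calc y = w₂ * (w₁ * (y * t₁) * t₂) := by rw [← hw₁, ← hw₂]
        _ = w₂ * w₁ * (y * (t₁ * t₂)) := by simp only [mul_assoc]

theorem greenR_mul_of_eq_mul_mul [Semigroup U] [Finite U] {S : Subsemigroup U} {e y u : U}
    (he : e ∈ S) (h : y = u * (y * e)) : GreenR (S : Set U) (y * e) y := by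
  obtain ⟨f, ⟨hf, w, hw⟩, hff⟩ := (lRecoveringMultipliers S e y he).exists_mul_self_eq_of_finite
    ⟨e, Or.inl rfl, u, h⟩
  have hyf : y * f = y := by
    calc y * f = w * (y * f * f) := by rw [← mul_assoc, ← hw]
      _ = y := by rw [mul_assoc y, hff, ← hw]
  refine ⟨?_, Or.inr ⟨e, he, rfl⟩⟩
  rcases hf with rfl | ⟨a, ha, rfl⟩
  exacts [Or.inl hyf, Or.inr ⟨a, ha, by rwa [mul_assoc]⟩]

theorem rclass_of_lclass_U_general [Semigroup U] [Finite U] (S : Subsemigroup U)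
    (x y s : U) (hs : s ∈ S)
    (h1 : GreenR (S : Set U) x y) (h2 : GreenL (Set.univ : Set U) (x * s) y) :
    GreenR (S : Set U) (x * s) y := by
  obtain ⟨e, he, hye⟩ : ∃ e ∈ S, y * e = x * s := by
    rcases h1.2 with rfl | ⟨a, ha, rfl⟩
    · exact ⟨s, hs, rfl⟩
    · exact ⟨a * s, S.mul_mem ha hs, (mul_assoc y a s).symm⟩
  rcases h2.1 with h | ⟨u, -, hu⟩
  · rw [h]
    exact ⟨Or.inl rfl, Or.inl rfl⟩
  · rw [← hye] at hu ⊢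
    exact greenR_mul_of_eq_mul_mul he hu.symm

/-- If `x R^S y` and `x s L^U y`, then `x s R^S y`. -/
theorem rclass_of_lclass_U [Semigroup U] [Finite U] (S : Subsemigroup U)
    (x y s : U) (hx : x ∈ S) (hy : y ∈ S) (hs : s ∈ S)
    (h1 : GreenR (S : Set U) x y) (h2 : GreenL (Set.univ : Set U) (x * s) y) :
    GreenR (S : Set U) (x * s) y :=
  rclass_of_lclass_U_general S x y s hs h1 h2
end

section
/- Let U be a finite semigroup, S a subsemigroup of U, and let x, y, t ∈ S. If x L^S y and tx R^U y, then tx L^S y. -/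
variable {U : Type*}

/-! Since `x L^S y`, write `t x = c y` with `c ∈ S`; since `t x R^U y`, `y = c y u` for some
`u ∈ U^1`. Left multiplication by `c` commutes with right multiplication by `u`, so in the finite
semigroup `U` the point `y` is periodic under `w ↦ c w`: `c^p y = y` for some `p ≥ 1`. Hence
`y = c^(p-1) (t x)` with `c^(p-1) ∈ S^1`. -/

theorem Function.Commute.exists_pos_iterate_eq_self {α : Type*} [Finite α] {f g : α → α}
    (hfg : Function.Commute f g) {y : α} (hy : g (f y) = y) : ∃ p, 0 < p ∧ f^[p] y = y := by
  obtain ⟨i, j, hij, hfij⟩ := (Set.finite_univ (α := α → α)).exists_lt_map_eq_of_forall_mem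
    (f := fun n : ℕ => f^[n]) fun _ => Set.mem_univ _
  have hy_i : g^[i] (f^[i] y) = y := by
    simpa only [hfg.symm.comp_iterate, Function.comp_apply] using
      Function.iterate_fixed (f := g ∘ f) hy i
  refine ⟨j - i, Nat.sub_pos_of_lt hij, ?_⟩
  calc f^[j - i] y = f^[j - i] (g^[i] (f^[i] y)) := by rw [hy_i]
    _ = g^[i] (f^[j - i + i] y) := by
      rw [(hfg.iterate_iterate (j - i) i).eq, Function.iterate_add_apply]
    _ = y := by rw [Nat.sub_add_cancel hij.le, ← hfij, hy_i]

theorem Subsemigroup.exists_mem_iterate_mul_left_eq {M : Type*} [Semigroup M]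
    (S : Subsemigroup M) {c : M} (hc : c ∈ S) (n : ℕ) :
    ∃ a ∈ S, ∀ w, (c * ·)^[n + 1] w = a * w := by
  induction n with
  | zero => exact ⟨c, hc, fun _ => rfl⟩
  | succ n ih =>
    obtain ⟨a, ha, hfa⟩ := ih
    refine ⟨c * a, S.mul_mem hc ha, fun w => ?_⟩
    rw [Function.iterate_succ_apply', hfa, mul_assoc]

theorem Subsemigroup.eq_or_exists_mem_mul_eq_of_mul_mul_eq [Semigroup U] [Finite U] (S : Subsemigroup U)
    {c y u : U} (hc : c ∈ S) (hy : c * y * u = y) :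
    c * y = y ∨ ∃ a ∈ (S : Set U), a * (c * y) = y := by
  have hcomm : Function.Commute (c * ·) (· * u) := fun w => (mul_assoc c w u).symm
  obtain ⟨p, hp, hperiod⟩ := hcomm.exists_pos_iterate_eq_self hy
  obtain ⟨q, rfl⟩ := Nat.exists_eq_succ_of_ne_zero hp.ne'
  rcases q with _ | q
  · exact Or.inl hperiod
  · obtain ⟨a, ha, hfa⟩ := S.exists_mem_iterate_mul_left_eq hc q
    refine Or.inr ⟨a, ha, ?_⟩
    rw [← hfa]
    exact hperiod

theorem lclass_of_rclass_U_general [Semigroup U] [Finite U] (S : Subsemigroup U)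
    (x y t : U) (ht : t ∈ S)
    (h1 : GreenL (S : Set U) x y) (h2 : GreenR (Set.univ : Set U) (t * x) y) :
    GreenL (S : Set U) (t * x) y := by
  obtain ⟨c, hcS, hcy⟩ : ∃ c ∈ S, c * y = t * x := by
    rcases h1.2 with rfl | ⟨b, hbS, hby⟩
    · exact ⟨t, ht, rfl⟩
    · exact ⟨t * b, S.mul_mem ht hbS, by rw [mul_assoc, hby]⟩
  refine ⟨?_, Or.inr ⟨c, hcS, hcy⟩⟩
  rcases h2.1 with heq | ⟨u, -, hu⟩
  · exact Or.inl heq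
  · rw [← hcy] at hu ⊢
    exact S.eq_or_exists_mem_mul_eq_of_mul_mul_eq hcS hu

/-- If `x L^S y` and `t x R^U y`, then `t x L^S y`. -/
theorem lclass_of_rclass_U [Semigroup U] [Finite U] (S : Subsemigroup U)
    (x y t : U) (hx : x ∈ S) (hy : y ∈ S) (ht : t ∈ S)
    (h1 : GreenL (S : Set U) x y) (h2 : GreenR (Set.univ : Set U) (t * x) y) :
    GreenL (S : Set U) (t * x) y :=
  lclass_of_rclass_U_general S x y t ht h1 h2
end

section
/- Let U be a finite semigroup, S a subsemigroup, and x ∈ S with x' ∈ U satisfying x x' x = x. Then the set L_x^U ∩ R_x^S is a group under the multiplication s * t = s x' t, with identity element x. -/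
variable {U : Type*}

/-!
Because `x x' x = x`, the element `x` is a two-sided identity for `s ⋆ t = s x' t` on
`G = L_x^U ∩ R_x^S`: elements of `L_x^U` end in `x` and elements of `R_x^S` begin with `x`.
Closure of `G` under `⋆` comes from `R^S` being a left congruence, and from the left divisors
`c s = x` provided by `L^U`. Those divisors also make `t ↦ s ⋆ t` injective on `G`; as `G` is
finite, it is onto, giving a right inverse `t` of `s`, and `s ⋆ (t ⋆ s) = s ⋆ x` shows by
cancellation that `t` is also a left inverse.
-/

section Green

variable {T : Set U} {x s : U}

theorem self_mem_Lcl_inter_Rcl [Mul U] (x : U) : x ∈ Lcl x ∩ Rcl T x :=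
  ⟨⟨.inl rfl, .inl rfl⟩, ⟨.inl rfl, .inl rfl⟩⟩

variable [Semigroup U]

theorem eq_or_exists_mul_eq_trans {S : Subsemigroup U} {a b c : U}
    (hab : a = b ∨ ∃ u ∈ S, a * u = b) (hbc : b = c ∨ ∃ u ∈ S, b * u = c) :
    a = c ∨ ∃ u ∈ S, a * u = c := by
  rcases hab with rfl | ⟨u, hu, rfl⟩
  · exact hbc
  rcases hbc with rfl | ⟨v, hv, rfl⟩
  · exact .inr ⟨u, hu, rfl⟩
  · exact .inr ⟨u * v, S.mul_mem hu hv, (mul_assoc _ _ _).symm⟩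

theorem GreenR.trans {S : Subsemigroup U} {a b c : U} (hab : GreenR S a b)
    (hbc : GreenR S b c) : GreenR S a c :=
  ⟨eq_or_exists_mul_eq_trans hab.1 hbc.1, eq_or_exists_mul_eq_trans hbc.2 hab.2⟩

theorem GreenR.mul_left {a b : U} (c : U) (h : GreenR T a b) : GreenR T (c * a) (c * b) :=
  ⟨h.1.imp (congrArg (c * ·)) fun ⟨u, hu, e⟩ => ⟨u, hu, by rw [mul_assoc, e]⟩,
    h.2.imp (congrArg (c * ·)) fun ⟨u, hu, e⟩ => ⟨u, hu, by rw [mul_assoc, e]⟩⟩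

variable {x' : U} (hx' : x * x' * x = x)
include hx'

theorem GreenL.mul_mul_eq (h : GreenL T x s) : s * x' * x = s := by
  rcases h.1 with rfl | ⟨a, -, rfl⟩
  · exact hx'
  · rw [mul_assoc a, mul_assoc a, hx']

theorem GreenR.mul_mul_eq (h : GreenR T x s) : x * x' * s = s := by
  rcases h.1 with rfl | ⟨a, -, rfl⟩
  · exact hx'
  · rw [← mul_assoc, hx']

theorem GreenL.exists_mul_eq (h : GreenL T x s) : ∃ c, c * s = x := by
  rcases h.2 with rfl | ⟨c, -, hc⟩
  · exact ⟨s * x', hx'⟩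
  · exact ⟨c, hc⟩

theorem GreenL.mul_mul_left_cancel {T' : Set U} {a b : U} (hs : GreenL T x s)
    (ha : GreenR T' x a) (hb : GreenR T' x b) (h : s * x' * a = s * x' * b) : a = b := by
  obtain ⟨c, hc⟩ := GreenL.exists_mul_eq hx' hs
  calc a = x * x' * a := (GreenR.mul_mul_eq hx' ha).symm
    _ = c * (s * x' * a) := by rw [← hc]; simp only [mul_assoc]
    _ = c * (s * x' * b) := by rw [h]
    _ = x * x' * b := by rw [← hc]; simp only [mul_assoc]
    _ = b := GreenR.mul_mul_eq hx' hb

theorem mul_mul_mem_Lcl {t : U} (hs : s ∈ Lcl x) (ht : t ∈ Lcl x) (htR : GreenR T x t) :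
    s * x' * t ∈ Lcl x := by
  obtain ⟨c, hc⟩ := GreenL.exists_mul_eq hx' hs
  obtain ⟨d, hd⟩ := GreenL.exists_mul_eq hx' ht
  refine ⟨.inr ?_, .inr ⟨d * c, trivial, ?_⟩⟩
  · rcases ht.1 with rfl | ⟨a, -, rfl⟩
    exacts [⟨s * x', trivial, rfl⟩, ⟨s * x' * a, trivial, by simp only [mul_assoc]⟩]
  · calc d * c * (s * x' * t) = d * (c * s * x' * t) := by simp only [mul_assoc]
      _ = d * t := by rw [hc, GreenR.mul_mul_eq hx' htR]
      _ = x := hd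

theorem mul_mul_mem_Rcl {S : Subsemigroup U} {t : U} (hsL : GreenL T x s)
    (hs : s ∈ Rcl S x) (ht : t ∈ Rcl S x) : s * x' * t ∈ Rcl S x := by
  have hts : GreenR S (s * x' * x) (s * x' * t) := GreenR.mul_left (s * x') ht
  rw [GreenL.mul_mul_eq hx' hsL] at hts
  exact GreenR.trans hs hts

theorem mul_mul_mem_Lcl_inter_Rcl {S : Subsemigroup U} {t : U}
    (hs : s ∈ Lcl x ∩ Rcl S x) (ht : t ∈ Lcl x ∩ Rcl S x) :
    s * x' * t ∈ Lcl x ∩ Rcl S x :=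
  ⟨mul_mul_mem_Lcl hx' hs.1 ht.1 ht.2, mul_mul_mem_Rcl hx' hs.1 hs.2 ht.2⟩

theorem exists_mul_mul_eq_of_finite [Finite U] {S : Subsemigroup U}
    (hs : s ∈ Lcl x ∩ Rcl S x) :
    ∃ t ∈ Lcl x ∩ Rcl S x, s * x' * t = x ∧ t * x' * s = x := by
  set G := Lcl x ∩ Rcl (S : Set U) x
  have hmaps : Set.MapsTo (s * x' * ·) G G := fun t ht => mul_mul_mem_Lcl_inter_Rcl hx' hs ht
  have hinj : Set.InjOn (s * x' * ·) G := fun a ha b hb h =>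
    GreenL.mul_mul_left_cancel hx' hs.1 ha.2 hb.2 h
  obtain ⟨t, ht, hst : s * x' * t = x⟩ := ((Set.toFinite G).injOn_iff_bijOn_of_mapsTo hmaps |>.mp hinj).surjOn
    (self_mem_Lcl_inter_Rcl x)
  refine ⟨t, ht, hst, GreenL.mul_mul_left_cancel hx' hs.1
    (mul_mul_mem_Lcl_inter_Rcl hx' ht hs).2 (self_mem_Lcl_inter_Rcl x).2 ?_⟩
  calc s * x' * (t * x' * s) = s * x' * t * x' * s := by simp only [mul_assoc]
    _ = x * x' * s := by rw [hst]
    _ = s := GreenR.mul_mul_eq hx' hs.2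
    _ = s * x' * x := (GreenL.mul_mul_eq hx' hs.1).symm

end Green

theorem lclassU_inter_rclassS_group_general [Semigroup U] [Finite U] (S : Subsemigroup U)
    (x : U) (x' : U) (hx' : x * x' * x = x) :
    x ∈ Lcl x ∩ Rcl (S : Set U) x ∧
    (∀ s ∈ Lcl x ∩ Rcl (S : Set U) x, ∀ t ∈ Lcl x ∩ Rcl (S : Set U) x,
      s * x' * t ∈ Lcl x ∩ Rcl (S : Set U) x) ∧
    (∀ s ∈ Lcl x ∩ Rcl (S : Set U) x, x * x' * s = s ∧ s * x' * x = s) ∧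
    (∀ s ∈ Lcl x ∩ Rcl (S : Set U) x, ∃ t ∈ Lcl x ∩ Rcl (S : Set U) x,
      s * x' * t = x ∧ t * x' * s = x) ∧
    (∀ s t u : U, s * x' * t * x' * u = s * x' * (t * x' * u)) :=
  ⟨self_mem_Lcl_inter_Rcl x,
    fun _ hs _ ht => mul_mul_mem_Lcl_inter_Rcl hx' hs ht,
    fun _ hs => ⟨GreenR.mul_mul_eq hx' hs.2, GreenL.mul_mul_eq hx' hs.1⟩,
    fun _ hs => exists_mul_mul_eq_of_finite hx' hs,
    fun s t u => by simp only [mul_assoc]⟩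

/-- If `x ∈ S` and `x' ∈ U` satisfies `x x' x = x`, then `L_x^U ∩ R_x^S` is a
group under `s * t := s x' t`, with identity `x`: it contains `x`, is closed
under the operation, `x` is a two-sided identity, inverses exist, and the
operation is associative. -/
theorem lclassU_inter_rclassS_group [Semigroup U] [Finite U] (S : Subsemigroup U)
    (x : U) (hx : x ∈ S) (x' : U) (hx' : x * x' * x = x) :
    x ∈ Lcl x ∩ Rcl (S : Set U) x ∧
    (∀ s ∈ Lcl x ∩ Rcl (S : Set U) x, ∀ t ∈ Lcl x ∩ Rcl (S : Set U) x,
      s * x' * t ∈ Lcl x ∩ Rcl (S : Set U) x) ∧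
    (∀ s ∈ Lcl x ∩ Rcl (S : Set U) x, x * x' * s = s ∧ s * x' * x = s) ∧
    (∀ s ∈ Lcl x ∩ Rcl (S : Set U) x, ∃ t ∈ Lcl x ∩ Rcl (S : Set U) x,
      s * x' * t = x ∧ t * x' * s = x) ∧
    (∀ s t u : U, s * x' * t * x' * u = s * x' * (t * x' * u)) :=
  lclassU_inter_rclassS_group_general S x x' hx'
end

section
/- Let U be a finite semigroup, S a subsemigroup, x ∈ S with x' ∈ U satisfying x x' x = x. The map from the quotient of Stab_S(L_x^U) by the kernel of its action on L_x^U to the group (L_x^U ∩ R_x^S, *), given by sending the class of s to xs, is a well-defined group isomorphism, where s * t = s x' t. -/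
variable {U : Type*}

/-!
Every element of `L_x^U` is a left multiple of `x` (or `x` itself), so two right
multiplications that agree at `x` agree on all of `L_x^U`: the kernel of the action is
detected by `x s`. The same observation with `x x' x = x` gives `u x' x = u` on `L_x^U`,
which turns `(x s) t` into `(x s) x' (x t)`. Finiteness enters twice. A stabilising `s`
permutes the finite set `L_x^U`, so `x` is a periodic point of `· * s`, and going once
round a doubled period yields `t ∈ S` with `x s t = x`, i.e. `x s R^S x`. Conversely, if
`g = x a` and `g b = x`, then `· * b` is a left inverse of `· * a` on `L_x^U`, so `· * a`
is injective there and hence permutes `L_x^U`.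
-/

open Function Set

def principalLeftIdeal [Mul U] (u : U) : Set U := {v | v = u ∨ ∃ c, c * u = v}

theorem mem_principalLeftIdeal_self [Mul U] (u : U) : u ∈ principalLeftIdeal u :=
  Or.inl rfl

theorem principalLeftIdeal_subset [Semigroup U] {u v : U} (h : v ∈ principalLeftIdeal u) :
    principalLeftIdeal v ⊆ principalLeftIdeal u := by
  rintro w (rfl | ⟨d, rfl⟩)
  · exact h
  · rcases h with rfl | ⟨c, rfl⟩
    · exact Or.inr ⟨d, rfl⟩
    · exact Or.inr ⟨d * c, mul_assoc d c u⟩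

theorem mul_mem_principalLeftIdeal_mul [Semigroup U] {u v : U} (a : U)
    (h : v ∈ principalLeftIdeal u) : v * a ∈ principalLeftIdeal (u * a) := by
  rcases h with rfl | ⟨c, rfl⟩
  · exact Or.inl rfl
  · exact Or.inr ⟨c, (mul_assoc c u a).symm⟩

theorem mul_eq_self_of_mem_principalLeftIdeal [Semigroup U] {x y a : U}
    (hy : y ∈ principalLeftIdeal x) (ha : x * a = x) : y * a = y := by
  rcases hy with rfl | ⟨c, rfl⟩
  · exact ha
  · rw [mul_assoc, ha]

theorem mem_Lcl_iff [Mul U] {x y : U} :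
    y ∈ Lcl x ↔ y ∈ principalLeftIdeal x ∧ x ∈ principalLeftIdeal y := by
  simp only [Lcl, GreenL, principalLeftIdeal, mem_ofPred_eq, mem_univ, true_and, eq_comm]

theorem mem_Lcl_self [Mul U] (x : U) : x ∈ Lcl x :=
  mem_Lcl_iff.2 ⟨mem_principalLeftIdeal_self x, mem_principalLeftIdeal_self x⟩

theorem mul_mem_Lcl [Semigroup U] {x y a : U} (hy : y ∈ Lcl x) (ha : x * a ∈ Lcl x) :
    y * a ∈ Lcl x := by
  rw [mem_Lcl_iff] at hy ha ⊢
  exact ⟨principalLeftIdeal_subset ha.1 (mul_mem_principalLeftIdeal_mul a hy.1),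
    principalLeftIdeal_subset (mul_mem_principalLeftIdeal_mul a hy.2) ha.2⟩

theorem act1_mul_left [Semigroup U] (S : Subsemigroup U) (c y : U) (o : Option S) :
    act1 S (c * y) o = c * act1 S y o := by
  cases o <;> simp [act1, mul_assoc]

theorem act1_eq_of_mem_principalLeftIdeal [Semigroup U] {S : Subsemigroup U} {x y : U}
    {o p : Option S} (hy : y ∈ principalLeftIdeal x) (h : act1 S x o = act1 S x p) :
    act1 S y o = act1 S y p := by
  rcases hy with rfl | ⟨c, rfl⟩
  · exact h
  · rw [act1_mul_left, act1_mul_left, h]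

theorem act1_eq_on_Lcl_iff [Semigroup U] {S : Subsemigroup U} {x : U} {o p : Option S} :
    (∀ y ∈ Lcl x, act1 S y o = act1 S y p) ↔ act1 S x o = act1 S x p :=
  ⟨fun h => h x (mem_Lcl_self x),
    fun h _ hy => act1_eq_of_mem_principalLeftIdeal (mem_Lcl_iff.1 hy).1 h⟩

theorem act1_eq_mul_mul_act1 [Semigroup U] (S : Subsemigroup U) {x x' y : U}
    (hx' : x * x' * x = x) (hy : y ∈ principalLeftIdeal x) (p : Option S) :
    act1 S y p = y * x' * act1 S x p := by
  have hyx : y * x' * x = y :=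
    (mul_assoc y x' x).trans (mul_eq_self_of_mem_principalLeftIdeal hy (by rw [← mul_assoc, hx']))
  rw [← act1_mul_left, hyx]

theorem Set.Finite.mem_periodicPts_of_image_eq {α : Type*} {f : α → α} {A : Set α}
    (hA : A.Finite) (h : f '' A = A) {x : α} (hx : x ∈ A) : x ∈ periodicPts f := by
  have hmaps : MapsTo f A A := fun y hy => h ▸ mem_image_of_mem f hy
  have hinj : InjOn f A := ((hA.surjOn_iff_bijOn_of_mapsTo hmaps).1 h.ge).injOn
  have : Finite A := hA.to_subtype
  obtain ⟨n, hn, hper⟩ := mem_periodicPts.1 ((hmaps.restrict_inj.2 hinj).mem_periodicPts ⟨x, hx⟩)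
  refine mk_mem_periodicPts hn ?_
  simpa only [IsPeriodicPt, IsFixedPt, Subtype.ext_iff, hmaps.coe_iterate_restrict] using hper

theorem exists_mem_iterate_mul_right_eq [Semigroup U] (S : Subsemigroup U) {s : U} (hs : s ∈ S) :
    ∀ n : ℕ, ∃ t ∈ S, ∀ y, (· * s)^[n + 1] y = y * t
  | 0 => ⟨s, hs, fun _ => rfl⟩
  | n + 1 => by
    obtain ⟨t, ht, hiter⟩ := exists_mem_iterate_mul_right_eq S hs n
    refine ⟨t * s, S.mul_mem ht hs, fun y => ?_⟩
    rw [iterate_succ_apply', hiter, mul_assoc]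

theorem exists_mul_mul_eq_of_mem_periodicPts [Semigroup U] (S : Subsemigroup U) {s x : U}
    (hs : s ∈ S) (hx : x ∈ periodicPts (· * s)) : ∃ t ∈ S, x * s * t = x := by
  obtain ⟨n, hn, hper⟩ := mem_periodicPts.1 hx
  obtain ⟨t, ht, hiter⟩ := exists_mem_iterate_mul_right_eq S hs (n * 2 - 2)
  refine ⟨t, ht, ?_⟩
  rw [← hiter, ← iterate_succ_apply, show (n * 2 - 2 + 1).succ = n * 2 by omega]
  exact hper.mul_const 2

theorem none_mem_StabOfL [Mul U] (S : Subsemigroup U) (x : U) : none ∈ StabOfL S x := by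
  simp [StabOfL, act1]

theorem act1_mem_Lcl_of_mem_StabOfL [Mul U] {S : Subsemigroup U} {x : U} {o : Option S}
    (ho : o ∈ StabOfL S x) : act1 S x o ∈ Lcl x :=
  ho ▸ mem_image_of_mem _ (mem_Lcl_self x)

theorem act1_mem_Rcl_of_mem_StabOfL [Semigroup U] [Finite U] {S : Subsemigroup U} {x : U}
    {o : Option S} (ho : o ∈ StabOfL S x) : act1 S x o ∈ Rcl S x := by
  cases o with
  | none => exact ⟨Or.inl rfl, Or.inl rfl⟩
  | some s =>
    obtain ⟨t, ht, hxst⟩ := exists_mul_mul_eq_of_mem_periodicPts S s.2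
      ((toFinite _).mem_periodicPts_of_image_eq ho (mem_Lcl_self x))
    exact ⟨Or.inr ⟨s, s.2, rfl⟩, Or.inr ⟨t, ht, hxst⟩⟩

theorem some_mem_StabOfL [Semigroup U] [Finite U] {S : Subsemigroup U} {x a b : U}
    (ha : a ∈ S) (hxa : x * a ∈ Lcl x) (hab : x * a * b = x) :
    some ⟨a, ha⟩ ∈ StabOfL S x := by
  have hmaps : MapsTo (· * a) (Lcl x) (Lcl x) := fun y hy => mul_mem_Lcl hy hxa
  have hinv : LeftInvOn (· * b) (· * a) (Lcl x) := fun y hy =>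
    (mul_assoc y a b).trans
      (mul_eq_self_of_mem_principalLeftIdeal (mem_Lcl_iff.1 hy).1 (by rw [← mul_assoc, hab]))
  exact ((toFinite _).injOn_iff_bijOn_of_mapsTo hmaps |>.1 hinv.injOn).image_eq

theorem exists_mem_StabOfL_act1_eq [Semigroup U] [Finite U] {S : Subsemigroup U} {x g : U}
    (hg : g ∈ Lcl x ∩ Rcl S x) : ∃ o ∈ StabOfL S x, act1 S x o = g := by
  rcases hg with ⟨hgL, rfl | ⟨a, ha, rfl⟩, hgx⟩
  · exact ⟨none, none_mem_StabOfL S x, rfl⟩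
  · rcases hgx with hxa | ⟨b, -, hab⟩
    · exact ⟨none, none_mem_StabOfL S x, hxa.symm⟩
    · exact ⟨some ⟨a, ha⟩, some_mem_StabOfL ha hgL hab, rfl⟩

theorem stab_quotient_iso_lclass_inter_rclass_general [Semigroup U] [Finite U]
    (S : Subsemigroup U) (x : U) (x' : U) (hx' : x * x' * x = x) :
    (∀ o ∈ StabOfL S x, act1 S x o ∈ Lcl x ∩ Rcl (S : Set U) x) ∧
    (∀ o ∈ StabOfL S x, ∀ p ∈ StabOfL S x,
      ((∀ y ∈ Lcl x, act1 S y o = act1 S y p) ↔ act1 S x o = act1 S x p)) ∧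
    (∀ g ∈ Lcl x ∩ Rcl (S : Set U) x, ∃ o ∈ StabOfL S x, act1 S x o = g) ∧
    (∀ o ∈ StabOfL S x, ∀ p ∈ StabOfL S x,
      act1 S (act1 S x o) p = act1 S x o * x' * act1 S x p) :=
  ⟨fun _ ho => ⟨act1_mem_Lcl_of_mem_StabOfL ho, act1_mem_Rcl_of_mem_StabOfL ho⟩,
    fun _ _ _ _ => act1_eq_on_Lcl_iff,
    fun _ hg => exists_mem_StabOfL_act1_eq hg,
    fun _ ho p _ => act1_eq_mul_mul_act1 S hx' (mem_Lcl_iff.1 (act1_mem_Lcl_of_mem_StabOfL ho)).1 p⟩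

/-- The map `s ↦ x s` from the quotient of `Stab_S(L_x^U)` by the kernel of its
action on `L_x^U` to the group `(L_x^U ∩ R_x^S, s * t = s x' t)` is a
well-defined group isomorphism: it maps into `L_x^U ∩ R_x^S`; two stabiliser
elements induce the same map on `L_x^U` iff they have the same image (so the map
on the quotient is well defined and injective); it is surjective; and it is a
homomorphism with respect to the multiplication `s * t = s x' t`. -/
theorem stab_quotient_iso_lclass_inter_rclass [Semigroup U] [Finite U]
    (S : Subsemigroup U) (x : U) (hx : x ∈ S) (x' : U) (hx' : x * x' * x = x) :
    (∀ o ∈ StabOfL S x, act1 S x o ∈ Lcl x ∩ Rcl (S : Set U) x) ∧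
    (∀ o ∈ StabOfL S x, ∀ p ∈ StabOfL S x,
      ((∀ y ∈ Lcl x, act1 S y o = act1 S y p) ↔ act1 S x o = act1 S x p)) ∧
    (∀ g ∈ Lcl x ∩ Rcl (S : Set U) x, ∃ o ∈ StabOfL S x, act1 S x o = g) ∧
    (∀ o ∈ StabOfL S x, ∀ p ∈ StabOfL S x,
      act1 S (act1 S x o) p = act1 S x o * x' * act1 S x p) :=
  stab_quotient_iso_lclass_inter_rclass_general S x x' hx'
end
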